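/- Let D and E be the ℕ×ℕ matrices with D(i,i) = y+i, D(i,i+1) = i+1, E(i,i) = x̄+i, E(i+1,i) = y+x̄+i (other entries zero), and let M = ED + (z̄+x−x̄)·D + (z+ȳ−y)·E + (ȳ−y)(x−x̄)·I. Then M is tridiagonal, and for all i ≥ 0: M(i,i) = (x+i)(ȳ+i) + (y+i)(z̄+i) + (z+i)(x̄+i) − i(i+1), M(i,i+1) = (x+z̄+i)(i+1), and M(i+1,i) = (x̄+y+i)(z+ȳ+i). -/

import Mathlib

/-- Entrywise product of ℕ×ℕ matrices; the (finite, for banded matrices) sums are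
expressed with `finsum`. -/
noncomputable def matMul {R : Type*} [CommRing R] (M N : ℕ → ℕ → R) : ℕ → ℕ → R :=
  fun i j => ∑ᶠ k, M i k * N k j

/-- Powers of a ℕ×ℕ matrix, with `matPow M 0` the identity matrix. -/
noncomputable def matPow {R : Type*} [CommRing R] (M : ℕ → ℕ → R) : ℕ → ℕ → ℕ → R
  | 0 => fun i j => if i = j then 1 else 0
  | n + 1 => matMul M (matPow M n)

/-- The matrix `D`: `D i i = y + i`, `D i (i+1) = i + 1`, other entries zero. -/
def matD {R : Type*} [CommRing R] (y : R) : ℕ → ℕ → R := fun i j =>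
  if j = i then y + (i : R) else if j = i + 1 then (i : R) + 1 else 0

/-- The matrix `E`: `E i i = x̄ + i`, `E (i+1) i = y + x̄ + i`, other entries zero. -/
def matE {R : Type*} [CommRing R] (y xb : R) : ℕ → ℕ → R := fun i j =>
  if j = i then xb + (i : R) else if i = j + 1 then y + xb + (j : R) else 0

/-- The matrix `M = ED + (z̄+x−x̄)D + (z+ȳ−y)E + (ȳ−y)(x−x̄)I`. -/
noncomputable def matM {R : Type*} [CommRing R] (x y z xb yb zb : R) : ℕ → ℕ → R :=
  fun i j =>
    matMul (matE y xb) (matD y) i j + (zb + x - xb) * matD y i j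
      + (z + yb - y) * matE y xb i j
      + (yb - y) * (x - xb) * (if i = j then 1 else 0)

/-! `E` is lower bidiagonal, so row `i + 1` of `E * N` is a combination of rows `i` and `i + 1`
of `N` (and row `0` a multiple of row `0`). Since `D` is upper bidiagonal, every entry of `ED`
is a sum of at most two products of explicit entries, which vanishes off the three central
diagonals; on them the identities are polynomial identities in `i`. -/

section

variable {R : Type*} [CommRing R]

theorem matMul_apply_eq_sum_of_row_support {M N : ℕ → ℕ → R} {i : ℕ} (s : Finset ℕ)
    (hM : ∀ k ∉ s, M i k = 0) (j : ℕ) :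
    matMul M N i j = ∑ k ∈ s, M i k * N k j := by
  refine finsum_eq_sum_of_support_subset _ fun k hk => ?_
  by_contra hks
  exact hk (by simp [hM k hks])

section Entries

variable (y xb : R) (i j : ℕ)

@[simp] theorem matD_apply_self : matD y i i = y + i := by simp [matD]

@[simp] theorem matD_apply_succ : matD y i (i + 1) = i + 1 := by simp [matD]

theorem matD_apply_of_ne (h₁ : j ≠ i) (h₂ : j ≠ i + 1) : matD y i j = 0 := by
  simp [matD, h₁, h₂]

@[simp] theorem matD_apply_succ_left : matD y (i + 1) i = 0 :=
  matD_apply_of_ne y _ _ (by omega) (by omega)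

@[simp] theorem matD_apply_add_two : matD y i (i + 1 + 1) = 0 :=
  matD_apply_of_ne y _ _ (by omega) (by omega)

@[simp] theorem matE_apply_self : matE y xb i i = xb + i := by simp [matE]

@[simp] theorem matE_apply_succ : matE y xb (i + 1) i = y + xb + i := by simp [matE]

theorem matE_apply_of_ne (h₁ : j ≠ i) (h₂ : i ≠ j + 1) : matE y xb i j = 0 := by
  simp [matE, h₁, h₂]

@[simp] theorem matE_apply_succ_right : matE y xb i (i + 1) = 0 :=
  matE_apply_of_ne y xb _ _ (by omega) (by omega)

variable (N : ℕ → ℕ → R)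

theorem matMul_matE_zero : matMul (matE y xb) N 0 j = xb * N 0 j := by
  rw [matMul_apply_eq_sum_of_row_support {0} fun k hk =>
    matE_apply_of_ne y xb 0 k (by simpa using hk) (by omega)]
  simp

theorem matMul_matE_succ :
    matMul (matE y xb) N (i + 1) j = (xb + (i + 1 : ℕ)) * N (i + 1) j + (y + xb + i) * N i j := by
  rw [matMul_apply_eq_sum_of_row_support {i + 1, i} fun k hk =>
    matE_apply_of_ne y xb (i + 1) k (by simp at hk; omega) (by simp at hk; omega)]
  simp

end Entries

variable (x y z xb yb zb : R)

theorem matM_eq_zero_of_far {i j : ℕ} (h : i + 1 < j ∨ j + 1 < i) :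
    matM x y z xb yb zb i j = 0 := by
  have hD : ∀ k, (k = i ∨ k + 1 = i) → matD y k j = 0 := fun k hk =>
    matD_apply_of_ne y k j (by omega) (by omega)
  have hED : matMul (matE y xb) (matD y) i j = 0 := by
    cases i with
    | zero => simp [matMul_matE_zero, hD 0 (by omega)]
    | succ k => simp [matMul_matE_succ, hD k (by omega), hD (k + 1) (by omega)]
  simp [matM, hED, hD i (by omega), matE_apply_of_ne y xb i j (by omega) (by omega),
    show i ≠ j by omega]

theorem matM_apply_self (i : ℕ) :
    matM x y z xb yb zb i i =
      (x + i) * (yb + i) + (y + i) * (zb + i) + (z + i) * (xb + i) - i * (i + 1) := by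
  cases i with
  | zero => simp [matM, matMul_matE_zero]; ring
  | succ k => simp [matM, matMul_matE_succ]; ring

theorem matM_apply_succ_right (i : ℕ) :
    matM x y z xb yb zb i (i + 1) = (x + zb + i) * (i + 1) := by
  cases i with
  | zero => simp [matM, matMul_matE_zero]; ring
  | succ k => simp [matM, matMul_matE_succ]; ring

theorem matM_apply_succ_left (i : ℕ) :
    matM x y z xb yb zb (i + 1) i = (xb + y + i) * (z + yb + i) := by
  simp [matM, matMul_matE_succ]; ring

end

theorem matM_entries {R : Type*} [CommRing R] (x y z xb yb zb : R) :
    (∀ i j : ℕ, (i + 1 < j ∨ j + 1 < i) → matM x y z xb yb zb i j = 0) ∧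
    (∀ i : ℕ, matM x y z xb yb zb i i =
      (x + (i : R)) * (yb + i) + (y + i) * (zb + i) + (z + i) * (xb + i)
        - i * (i + 1)) ∧
    (∀ i : ℕ, matM x y z xb yb zb i (i + 1) = (x + zb + (i : R)) * ((i : R) + 1)) ∧
    (∀ i : ℕ, matM x y z xb yb zb (i + 1) i = (xb + y + (i : R)) * (z + yb + (i : R))) :=
  ⟨fun _ _ => matM_eq_zero_of_far x y z xb yb zb, matM_apply_self x y z xb yb zb,
    matM_apply_succ_right x y z xb yb zb, matM_apply_succ_left x y z xb yb zb⟩
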